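/- Discrete Schwarz reflection: let F : {black squares of the upper half plane lattice} → ℂ be discrete holomorphic on the discrete upper half plane ℍ^δ (i.e. [∂̄^δ F](v) = 0 for every white square v of ℍ^δ), with Im F(u) = 0 for every black square u centered on the real axis. Define F_ℂ(u) = F(u) for u ∈ ℍ^δ and F_ℂ(u) = conj(F(ū)) for u in the lower half plane, where ū is the square symmetric to u with respect to the real axis. Then F_ℂ is discrete holomorphic on the whole plane lattice ℂ^δ. -/

import Mathlib

open Complex ComplexConjugate

/-- λ = e^{iπ/4} -/
noncomputable def lam : ℂ := Complex.exp ((Real.pi : ℂ) * Complex.I / 4)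

/-- Black squares of the lattice ℂ^δ: centers `(nδ/√2, mδ/√2)` with `n, m` both even. -/
def IsBlack (δ : ℝ) (u : ℂ) : Prop :=
  ∃ n m : ℤ, Even n ∧ Even m ∧ u.re = n * (δ / Real.sqrt 2) ∧ u.im = m * (δ / Real.sqrt 2)

/-- White squares of the lattice ℂ^δ: centers `(nδ/√2, mδ/√2)` with `n, m` both odd. -/
def IsWhite (δ : ℝ) (v : ℂ) : Prop :=
  ∃ n m : ℤ, Odd n ∧ Odd m ∧ v.re = n * (δ / Real.sqrt 2) ∧ v.im = m * (δ / Real.sqrt 2)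

/-- The discrete ∂̄-operator: for a function on black squares,
`[∂̄^δ F](v) = (1/2)[(F(v+δλ) − F(v−δλ))/(2δλ̄) + (F(v+δλ̄) − F(v−δλ̄))/(2δλ)]`. -/
noncomputable def dbar (δ : ℝ) (F : ℂ → ℂ) (v : ℂ) : ℂ :=
  (1 / 2) * ((F (v + (δ : ℂ) * lam) - F (v - (δ : ℂ) * lam)) / (2 * (δ : ℂ) * conj lam)
    + (F (v + (δ : ℂ) * conj lam) - F (v - (δ : ℂ) * conj lam)) / (2 * (δ : ℂ) * lam))

/-!
On each side of the real axis the reflected function agrees, at the four black neighbours of a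
white square `v`, either with `F` or with `u ↦ conj (F (conj u))`; on the axis itself the two
agree because `F` is real there. Conjugation swaps the directions `λ` and `λ̄`, so
`[∂̄^δ (conj ∘ F ∘ conj)](v) = conj ([∂̄^δ F](conj v))`, and `conj v` is a white square of the
upper half plane whenever `v` is one of the lower half plane.
-/

def neighbours (δ : ℝ) (v : ℂ) : Set ℂ :=
  {v + δ * lam, v - δ * lam, v + δ * conj lam, v - δ * conj lam}

lemma ofReal_mul_lam (δ : ℝ) : (δ : ℂ) * lam = ((δ / √2 : ℝ) : ℂ) * (1 + I) := by
  have hπ : (Real.pi : ℂ) * I / 4 = ((Real.pi / 4 : ℝ) : ℂ) * I := by push_cast; ring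
  rw [lam, hπ, exp_mul_I, ← ofReal_cos, ← ofReal_sin, Real.cos_pi_div_four,
    Real.sin_pi_div_four]
  have h2 : √2 * √2 = 2 := Real.mul_self_sqrt zero_le_two
  have hδ : δ / √2 = δ * (√2 / 2) := by
    field_simp
    linear_combination (-δ) * h2
  rw [hδ]
  push_cast
  ring

lemma ofReal_mul_conj_lam (δ : ℝ) : (δ : ℂ) * conj lam = ((δ / √2 : ℝ) : ℂ) * (1 - I) := by
  have h := congrArg conj (ofReal_mul_lam δ)
  simp only [map_mul, conj_ofReal, map_add, map_one, conj_I] at h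
  rw [h, sub_eq_add_neg]

lemma neighbours_eq (δ : ℝ) (v : ℂ) :
    neighbours δ v = {v + ((δ / √2 : ℝ) : ℂ) * (1 + I), v - ((δ / √2 : ℝ) : ℂ) * (1 + I),
      v + ((δ / √2 : ℝ) : ℂ) * (1 - I), v - ((δ / √2 : ℝ) : ℂ) * (1 - I)} := by
  rw [neighbours, ofReal_mul_lam, ofReal_mul_conj_lam]

lemma im_of_mem_neighbours {δ : ℝ} {u v : ℂ} (hu : u ∈ neighbours δ v) :
    u.im = v.im + δ / √2 ∨ u.im = v.im - δ / √2 := by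
  rw [neighbours_eq] at hu
  rcases hu with rfl | rfl | rfl | rfl <;> simp [sub_eq_add_neg]

lemma dbar_congr {δ : ℝ} {F G : ℂ → ℂ} {v : ℂ} (h : Set.EqOn F G (neighbours δ v)) :
    dbar δ F v = dbar δ G v := by
  simp only [dbar]
  rw [h (by simp [neighbours]), h (by simp [neighbours]), h (by simp [neighbours]),
    h (by simp [neighbours])]

lemma dbar_conj_comp_conj (δ : ℝ) (F : ℂ → ℂ) (v : ℂ) :
    dbar δ (fun u => conj (F (conj u))) v = conj (dbar δ F (conj v)) := by
  simp only [dbar, map_add, map_sub, map_mul, map_div₀, map_one, map_ofNat, conj_conj,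
    conj_ofReal]
  ring

lemma isWhite_conj {δ : ℝ} {v : ℂ} (hv : IsWhite δ v) : IsWhite δ (conj v) := by
  obtain ⟨n, m, hn, hm, hre, him⟩ := hv
  exact ⟨n, -m, hn, hm.neg, by simpa using hre, by simp [him]⟩

namespace IsWhite

variable {δ : ℝ} {u v : ℂ}

lemma isBlack_of_mem_neighbours (hv : IsWhite δ v) (hu : u ∈ neighbours δ v) :
    IsBlack δ u := by
  obtain ⟨n, m, hn, hm, hre, him⟩ := hv
  rw [neighbours_eq] at hu
  rcases hu with rfl | rfl | rfl | rfl
  · exact ⟨n + 1, m + 1, hn.add_one, hm.add_one, by simp [hre]; ring, by simp [him]; ring⟩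
  · exact ⟨n - 1, m - 1, hn.sub_odd odd_one, hm.sub_odd odd_one, by simp [hre]; ring,
      by simp [him]; ring⟩
  · exact ⟨n + 1, m - 1, hn.add_one, hm.sub_odd odd_one, by simp [hre]; ring,
      by simp [him]; ring⟩
  · exact ⟨n - 1, m + 1, hn.sub_odd odd_one, hm.add_one, by simp [hre]; ring,
      by simp [him]; ring⟩

lemma div_sqrt_two_le_abs_im (hv : IsWhite δ v) : δ / √2 ≤ |v.im| := by
  obtain ⟨n, m, -, hm, -, him⟩ := hv
  have hm1 : (1 : ℝ) ≤ |(m : ℝ)| := by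
    rw [← Int.cast_abs]
    exact_mod_cast Int.one_le_abs (by rintro rfl; exact Int.not_odd_zero hm)
  rw [him, abs_mul]
  calc δ / √2 ≤ |δ / √2| := le_abs_self _
    _ ≤ |(m : ℝ)| * |δ / √2| := le_mul_of_one_le_left (abs_nonneg _) hm1

lemma im_ne_zero (hδ : 0 < δ) (hv : IsWhite δ v) : v.im ≠ 0 := by
  have := hv.div_sqrt_two_le_abs_im
  have : 0 < δ / √2 := by positivity
  exact abs_pos.mp (by linarith)

lemma im_nonneg_of_mem_neighbours (hδ : 0 ≤ δ) (hv : IsWhite δ v) (hpos : 0 < v.im)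
    (hu : u ∈ neighbours δ v) : 0 ≤ u.im := by
  have hle := hv.div_sqrt_two_le_abs_im
  have : 0 ≤ δ / √2 := by positivity
  rw [abs_of_pos hpos] at hle
  rcases im_of_mem_neighbours hu with h | h <;> linarith

lemma im_nonpos_of_mem_neighbours (hδ : 0 ≤ δ) (hv : IsWhite δ v) (hneg : v.im < 0)
    (hu : u ∈ neighbours δ v) : u.im ≤ 0 := by
  have hle := hv.div_sqrt_two_le_abs_im
  have : 0 ≤ δ / √2 := by positivity
  rw [abs_of_neg hneg] at hle
  rcases im_of_mem_neighbours hu with h | h <;> linarith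

end IsWhite

/-- Discrete Schwarz reflection principle: if `F` is discrete holomorphic on the discrete upper
half plane (i.e. `[∂̄^δ F](v) = 0` at every white square with positive imaginary part) and
`Im F(u) = 0` at every black square on the real axis, then the reflected extension
`F_ℂ(u) = F(u)` for `Im u ≥ 0`, `F_ℂ(u) = conj(F(ū))` otherwise, is discrete holomorphic at
every white square of the whole plane. -/
theorem stmt6 (δ : ℝ) (hδ : 0 < δ) (F : ℂ → ℂ)
    (hhol : ∀ v : ℂ, IsWhite δ v → 0 < v.im → dbar δ F v = 0)
    (hreal : ∀ u : ℂ, IsBlack δ u → u.im = 0 → (F u).im = 0) :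
    ∀ v : ℂ, IsWhite δ v →
      dbar δ (fun u => if 0 ≤ u.im then F u else conj (F (conj u))) v = 0 := by
  intro v hv
  rcases (hv.im_ne_zero hδ).lt_or_gt with hneg | hpos
  · have hagree : Set.EqOn (fun u => if 0 ≤ u.im then F u else conj (F (conj u)))
        (fun u => conj (F (conj u))) (neighbours δ v) := by
      intro u hu
      by_cases hu0 : 0 ≤ u.im
      · have him : u.im = 0 := le_antisymm (hv.im_nonpos_of_mem_neighbours hδ.le hneg hu) hu0
        have hFu := hreal u (hv.isBlack_of_mem_neighbours hu) him
        simp only [if_pos hu0, conj_eq_iff_im.mpr him, conj_eq_iff_im.mpr hFu]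
      · simp only [if_neg hu0]
    rw [dbar_congr hagree, dbar_conj_comp_conj,
      hhol _ (isWhite_conj hv) (by simpa using hneg), map_zero]
  · have hagree : Set.EqOn (fun u => if 0 ≤ u.im then F u else conj (F (conj u))) F
        (neighbours δ v) := fun u hu => if_pos (hv.im_nonneg_of_mem_neighbours hδ.le hpos hu)
    rw [dbar_congr hagree, hhol v hv hpos]
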